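/- Every parallel extension of a laminar matroid is laminar. That is, if M is laminar, e is an element of M, and M' is obtained from M by adding a new element f in parallel with e, then M' is laminar. -/

import Mathlib

open Set

variable {α : Type*}

/-- A circuit: a minimal dependent set. -/
def Matroid.IsCircuit' (M : Matroid α) (C : Set α) : Prop :=
  M.Dep C ∧ ∀ D, D ⊂ C → M.Indep D

/-- The circuit characterization of laminar matroids. -/
def Matroid.IsLaminar (M : Matroid α) : Prop :=
  ∀ C₁ C₂, M.IsCircuit' C₁ → M.IsCircuit' C₂ → (C₁ ∩ C₂).Nonempty →
    M.closure C₁ ⊆ M.closure C₂ ∨ M.closure C₂ ⊆ M.closure C₁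

/-- A laminar family: any two intersecting members are comparable. -/
def IsLaminarFamily (𝒜 : Set (Set α)) : Prop :=
  ∀ A ∈ 𝒜, ∀ B ∈ 𝒜, (A ∩ B).Nonempty → A ⊆ B ∨ B ⊆ A

/-- `M` is presented by the laminar family `𝒜` with capacities `c`. -/
def Matroid.IsLaminarPresBy (M : Matroid α) (E : Set α) (𝒜 : Set (Set α)) (c : Set α → ℕ) :
    Prop :=
  M.E = E ∧ ∀ I, M.Indep I ↔ I ⊆ E ∧ ∀ A ∈ 𝒜, (I ∩ A).ncard ≤ c A

/-- `M` has some laminar presentation (on its own ground set); this captures being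
isomorphic to a laminar matroid `M(E, 𝒜, c)`. -/
def Matroid.HasLaminarPres (M : Matroid α) : Prop :=
  ∃ (𝒜 : Set (Set α)) (c : Set α → ℕ), IsLaminarFamily 𝒜 ∧ (∀ A ∈ 𝒜, A ⊆ M.E) ∧
    M.IsLaminarPresBy M.E 𝒜 c

/-!
Since `{e, f}` is a circuit of `M'`, replacing `f` by `e` does not change `M'`-closures. This
replacement sends a circuit of `M'` to `{e}` if it is `{e, f}`, and otherwise to a circuit of `M`:
a circuit avoiding `f` is a circuit of `M = M' ↾ E(M)`, and a circuit `C ∋ f` avoiding `e` becomes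
`C - f + e`. Intersecting circuits have intersecting images, the images have comparable
`M`-closures by laminarity of `M`, and for subsets of `E(M)` comparable `M`-closures give
comparable `M'`-closures.
-/

lemma Set.image_update_id_of_notMem [DecidableEq α] {C : Set α} {e f : α} (hf : f ∉ C) :
    Function.update id f e '' C = C := by
  refine (image_congr fun x hx ↦ ?_).trans (image_id C)
  rw [Function.update_of_ne (ne_of_mem_of_not_mem hx hf)]

lemma Set.image_update_id_of_mem [DecidableEq α] {C : Set α} {e f : α} (hf : f ∈ C) :
    Function.update id f e '' C = insert e (C \ {f}) := by
  ext x
  simp only [mem_image, mem_insert_iff, mem_sdiff, mem_singleton_iff, Function.update_apply, id]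
  constructor
  · rintro ⟨y, hy, rfl⟩
    by_cases hyf : y = f <;> simp [hyf, hy]
  · rintro (rfl | ⟨hx, hxf⟩)
    · exact ⟨f, hf, if_pos rfl⟩
    · exact ⟨x, hx, if_neg hxf⟩

namespace Matroid

variable {M M' : Matroid α} {C X Y R S T : Set α} {e f : α}

lemma isCircuit'_iff_isCircuit : M.IsCircuit' C ↔ M.IsCircuit C :=
  isCircuit_iff_forall_ssubset.symm

lemma isLaminar_iff : M.IsLaminar ↔ ∀ C₁ C₂, M.IsCircuit C₁ → M.IsCircuit C₂ →
    (C₁ ∩ C₂).Nonempty → M.closure C₁ ⊆ M.closure C₂ ∨ M.closure C₂ ⊆ M.closure C₁ := by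
  simp only [IsLaminar, isCircuit'_iff_isCircuit]

lemma IsLaminar.closure_subset_or_of_isCircuit_or_singleton (hM : M.IsLaminar)
    (hS : M.IsCircuit S ∨ ∃ e, S = {e}) (hT : M.IsCircuit T ∨ ∃ e, T = {e})
    (hST : (S ∩ T).Nonempty) : M.closure S ⊆ M.closure T ∨ M.closure T ⊆ M.closure S := by
  obtain ⟨x, hxS, hxT⟩ := hST
  rcases hS with hS | ⟨e, rfl⟩
  · rcases hT with hT | ⟨e, rfl⟩
    · exact isLaminar_iff.1 hM S T hS hT ⟨x, hxS, hxT⟩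
    · rw [mem_singleton_iff.1 hxT] at hxS
      exact Or.inr (M.closure_subset_closure (singleton_subset_iff.2 hxS))
  · rw [mem_singleton_iff.1 hxS] at hxT
    exact Or.inl (M.closure_subset_closure (singleton_subset_iff.2 hxT))

lemma IsCircuit.mem_closure_singleton_of_pair (h : M.IsCircuit {e, f}) : e ∈ M.closure {f} :=
  M.closure_subset_closure (by simp [subset_def]) (h.mem_closure_sdiff_singleton_of_mem (by simp))

lemma IsCircuit.closure_image_update_eq [DecidableEq α] (h : M.IsCircuit {e, f}) (hX : X ⊆ M.E) :
    M.closure (Function.update id f e '' X) = M.closure X := by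
  have hef : e ∈ M.closure {f} := h.mem_closure_singleton_of_pair
  have hfe : f ∈ M.closure {e} := (pair_comm e f ▸ h).mem_closure_singleton_of_pair
  refine (M.closure_subset_closure_of_subset_closure ?_).antisymm
    (M.closure_subset_closure_of_subset_closure ?_)
  · rintro _ ⟨x, hx, rfl⟩
    obtain rfl | hxf := eq_or_ne x f
    · simpa using M.closure_subset_closure (singleton_subset_iff.2 hx) hef
    · simpa [hxf] using M.mem_closure_of_mem' hx (hX hx)
  · intro x hx
    obtain rfl | hxf := eq_or_ne x f
    · have he : e ∈ Function.update id x e '' X := ⟨x, hx, by simp⟩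
      exact M.closure_subset_closure (singleton_subset_iff.2 he) hfe
    · exact M.mem_closure_of_mem' ⟨x, hx, by simp [hxf]⟩ (hX hx)

lemma closure_subset_closure_of_restrict_closure_subset (hR : R ⊆ M.E) (hX : X ⊆ R)
    (hY : Y ⊆ R) (h : (M ↾ R).closure X ⊆ (M ↾ R).closure Y) : M.closure X ⊆ M.closure Y := by
  rw [restrict_closure_eq _ hX hR, restrict_closure_eq _ hY hR] at h
  exact M.closure_subset_closure_of_subset_closure fun x hx ↦
    (h ⟨M.mem_closure_of_mem' hx (hR (hX hx)), hX hx⟩).1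

structure IsParallelExtension (M' M : Matroid α) (e f : α) : Prop where
  ground_eq : M'.E = insert f M.E
  notMem_ground : f ∉ M.E
  indep_singleton : M.Indep {e}
  indep_iff : ∀ I, M'.Indep I ↔
    (f ∉ I ∧ M.Indep I) ∨ (f ∈ I ∧ e ∉ I ∧ M.Indep (insert e (I \ {f})))

namespace IsParallelExtension

lemma mem_ground (h : M'.IsParallelExtension M e f) : e ∈ M.E :=
  h.indep_singleton.subset_ground rfl

lemma ne (h : M'.IsParallelExtension M e f) : e ≠ f :=
  fun hef ↦ h.notMem_ground (hef ▸ h.mem_ground)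

lemma ground_subset (h : M'.IsParallelExtension M e f) : M.E ⊆ M'.E :=
  h.ground_eq ▸ subset_insert f M.E

lemma indep_iff_of_notMem (h : M'.IsParallelExtension M e f) {I : Set α} (hfI : f ∉ I) :
    M'.Indep I ↔ M.Indep I := by
  simp [h.indep_iff, hfI]

lemma indep_iff_of_mem (h : M'.IsParallelExtension M e f) {I : Set α} (hfI : f ∈ I)
    (heI : e ∉ I) : M'.Indep I ↔ M.Indep (insert e (I \ {f})) := by
  simp [h.indep_iff, hfI, heI]

lemma restrict_eq (h : M'.IsParallelExtension M e f) : M' ↾ M.E = M :=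
  ext_indep rfl fun I hI ↦ by
    rw [restrict_indep_iff, h.indep_iff_of_notMem fun hf ↦ h.notMem_ground (hI hf)]
    exact and_iff_left hI

lemma isCircuit_pair (h : M'.IsParallelExtension M e f) : M'.IsCircuit {e, f} := by
  rw [isCircuit_iff_dep_forall_sdiff_singleton_indep]
  refine ⟨⟨fun hi ↦ ?_, ?_⟩, ?_⟩
  · simp [h.indep_iff, h.ne] at hi
  · rw [h.ground_eq]
    exact insert_subset (mem_insert_of_mem _ h.mem_ground) (by simp)
  · simp only [mem_insert_iff, mem_singleton_iff, forall_eq_or_imp, forall_eq]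
    constructor
    · rw [pair_sdiff_left h.ne, h.indep_iff]
      simpa [h.ne] using h.indep_singleton
    · rw [pair_sdiff_right h.ne, h.indep_iff_of_notMem (by simpa using h.ne.symm)]
      exact h.indep_singleton

lemma isCircuit_insert_sdiff (h : M'.IsParallelExtension M e f) (hC : M'.IsCircuit C)
    (hfC : f ∈ C) (heC : e ∉ C) : M.IsCircuit (insert e (C \ {f})) := by
  have hCf : C \ {f} ⊆ M.E := by
    rw [sdiff_subset_iff, singleton_union, ← h.ground_eq]
    exact hC.subset_ground
  rw [isCircuit_iff_dep_forall_sdiff_singleton_indep]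
  refine ⟨⟨fun hi ↦ hC.not_indep ((h.indep_iff_of_mem hfC heC).2 hi),
    insert_subset h.mem_ground hCf⟩, ?_⟩
  rintro x (rfl | ⟨hxC, hxf⟩)
  · rw [insert_sdiff_self_of_notMem fun hx ↦ heC hx.1,
      ← h.indep_iff_of_notMem (notMem_sdiff_of_mem (mem_singleton f))]
    exact hC.sdiff_singleton_indep hfC
  · have hxe : x ≠ e := ne_of_mem_of_not_mem hxC heC
    rw [insert_sdiff_of_notMem _ (by simpa using hxe.symm), sdiff_sdiff_comm,
      ← h.indep_iff_of_mem (I := C \ {x}) ⟨hfC, Ne.symm hxf⟩ fun he ↦ heC he.1]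
    exact hC.sdiff_singleton_indep hxC

lemma isCircuit_image_or_eq_singleton [DecidableEq α] (h : M'.IsParallelExtension M e f)
    (hC : M'.IsCircuit C) :
    M.IsCircuit (Function.update id f e '' C) ∨ Function.update id f e '' C = {e} := by
  by_cases hfC : f ∈ C
  · rw [image_update_id_of_mem hfC]
    by_cases heC : e ∈ C
    · have hCef : C = {e, f} :=
        (h.isCircuit_pair.eq_of_subset_isCircuit hC (insert_subset heC (by simpa))).symm
      rw [hCef, pair_sdiff_right h.ne, insert_eq_of_mem (mem_singleton e)]
      exact Or.inr rfl
    · exact Or.inl (h.isCircuit_insert_sdiff hC hfC heC)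
  · left
    have hCE : C ⊆ M.E := by
      intro x hx
      simpa [h.ground_eq, ne_of_mem_of_not_mem hx hfC] using hC.subset_ground hx
    rw [image_update_id_of_notMem hfC, ← h.restrict_eq, restrict_isCircuit_iff h.ground_subset]
    exact ⟨hC, hCE⟩

lemma image_update_subset_ground [DecidableEq α] (h : M'.IsParallelExtension M e f)
    (hX : X ⊆ M'.E) : Function.update id f e '' X ⊆ M.E := by
  rintro _ ⟨x, hx, rfl⟩
  obtain rfl | hxf := eq_or_ne x f
  · simpa using h.mem_ground
  · simpa [hxf, h.ground_eq] using hX hx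

lemma closure_subset_closure_of_closure_subset (h : M'.IsParallelExtension M e f)
    (hX : X ⊆ M.E) (hY : Y ⊆ M.E) (hXY : M.closure X ⊆ M.closure Y) :
    M'.closure X ⊆ M'.closure Y :=
  closure_subset_closure_of_restrict_closure_subset h.ground_subset hX hY
    (h.restrict_eq ▸ hXY)

lemma isLaminar (h : M'.IsParallelExtension M e f) (hM : M.IsLaminar) : M'.IsLaminar := by
  rw [isLaminar_iff]
  intro C₁ C₂ hC₁ hC₂ hC₁₂
  classical
  set σ := Function.update id f e
  have hS : (σ '' C₁ ∩ σ '' C₂).Nonempty := (hC₁₂.image σ).mono (image_inter_subset _ _ _)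
  have hcl (C : Set α) (hC : M'.IsCircuit C) : M'.closure (σ '' C) = M'.closure C :=
    h.isCircuit_pair.closure_image_update_eq hC.subset_ground
  have himage (C : Set α) (hC : M'.IsCircuit C) : M.IsCircuit (σ '' C) ∨ ∃ x, σ '' C = {x} :=
    (h.isCircuit_image_or_eq_singleton hC).imp_right fun h ↦ ⟨e, h⟩
  rw [← hcl C₁ hC₁, ← hcl C₂ hC₂]
  have hE₁ := h.image_update_subset_ground hC₁.subset_ground
  have hE₂ := h.image_update_subset_ground hC₂.subset_ground
  exact (hM.closure_subset_or_of_isCircuit_or_singleton (himage C₁ hC₁) (himage C₂ hC₂) hS).imp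
    (h.closure_subset_closure_of_closure_subset hE₁ hE₂)
    (h.closure_subset_closure_of_closure_subset hE₂ hE₁)

end IsParallelExtension

end Matroid

theorem stmt_19_general (M : Matroid α) (hM : M.IsLaminar)
    (e : α) (he : M.Indep {e}) (f : α) (hf : f ∉ M.E)
    (M' : Matroid α) (hE : M'.E = insert f M.E)
    (hI : ∀ I, M'.Indep I ↔
      (f ∉ I ∧ M.Indep I) ∨ (f ∈ I ∧ e ∉ I ∧ M.Indep (insert e (I \ {f})))) :
    M'.IsLaminar :=
  Matroid.IsParallelExtension.isLaminar ⟨hE, hf, he, hI⟩ hM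

theorem stmt_19 (M : Matroid α) (hfin : M.E.Finite) (hM : M.IsLaminar)
    (e : α) (he : M.Indep {e}) (f : α) (hf : f ∉ M.E)
    (M' : Matroid α) (hE : M'.E = insert f M.E)
    (hI : ∀ I, M'.Indep I ↔
      (f ∉ I ∧ M.Indep I) ∨ (f ∈ I ∧ e ∉ I ∧ M.Indep (insert e (I \ {f})))) :
    M'.IsLaminar :=
  stmt_19_general M hM e he f hf M' hE hI
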